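/- arXiv:2003.01154 — 4 statements merged into one kernel-verified Lean document; each statement's English description precedes it below -/
import Mathlib

section
/- Let G=(V,E) be a finite simple graph, let P ⊆ V, and let α > 0 be such that every S ⊆ P with |S| ≤ |P|/2 satisfies |∂_{G[P]}(S)| ≥ α|S|. Let q ≥ 2 be an integer and let ω : V → {1,…,q} be a colouring such that |ω^{−1}(c) ∩ P| ≤ |P|/2 for every colour c. Then the number of edges uv of the induced subgraph G[P] with ω(u) ≠ ω(v) is at least α·|P|/2. -/
open Classical

noncomputable section

namespace Paper

variable {V : Type*}

/-- The degree of a vertex. -/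
def deg (G : SimpleGraph V) (v : V) : ℕ := (G.neighborSet v).ncard

/-- The volume of a vertex set: the sum of the degrees of its vertices. -/
def vol (G : SimpleGraph V) (S : Set V) : ℕ := ∑ᶠ v ∈ S, deg G v

/-- The edge boundary ∂(S): edges of `G` with exactly one endpoint in `S`. -/
def bdry (G : SimpleGraph V) (S : Set V) : Set (Sym2 V) :=
  {e | e ∈ G.edgeSet ∧ (∃ u ∈ e, u ∈ S) ∧ (∃ v ∈ e, v ∉ S)}

/-- The closure ∇(S): edges of `G` with at least one endpoint in `S`. -/
def cl (G : SimpleGraph V) (S : Set V) : Set (Sym2 V) :=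
  {e | e ∈ G.edgeSet ∧ ∃ u ∈ e, u ∈ S}

/-- The conductance φ_G(S) = |∂(S)| / vol_G(S). -/
def cond (G : SimpleGraph V) (S : Set V) : ℝ :=
  ((bdry G S).ncard : ℝ) / (vol G S : ℝ)

/-- The conductance φ(G) of the graph: the minimum of φ_G(S) over nonempty S
with vol_G(S) ≤ vol_G(V)/2. -/
def graphCond [Fintype V] (G : SimpleGraph V) : ℝ :=
  sInf {x : ℝ | ∃ S : Set V, S.Nonempty ∧ 2 * vol G S ≤ vol G Set.univ ∧ x = cond G S}

/-- The induced subgraph G[P], realised as a graph on the same vertex set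
(vertices outside `P` are isolated). -/
def restrict (G : SimpleGraph V) (P : Set V) : SimpleGraph V where
  Adj u v := G.Adj u v ∧ u ∈ P ∧ v ∈ P
  symm := ⟨fun _ _ h => ⟨h.1.symm, h.2.2, h.2.1⟩⟩
  loopless := ⟨fun u h => G.loopless.irrefl u h.1⟩

/-- e(S,T): the number of edges of `G` with one endpoint in `S` and the other in `T \ S`. -/
def eCount (G : SimpleGraph V) (S T : Set V) : ℕ :=
  ({e | e ∈ G.edgeSet ∧ ∃ u v, e = s(u, v) ∧ u ∈ S ∧ v ∈ T \ S}).ncard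

/-- φ(S,B) = e(S,B) / ((vol(B∖S)/vol(B)) · e(S, V∖B)). -/
def condPair (G : SimpleGraph V) (S B : Set V) : ℝ :=
  (eCount G S B : ℝ) /
    (((vol G (B \ S) : ℝ) / (vol G B : ℝ)) * (eCount G S (Set.univ \ B) : ℝ))

/-- An edge is monochromatic under a colouring if all its endpoints get the same colour. -/
def Mono {q : ℕ} (χ : V → Fin q) (e : Sym2 V) : Prop :=
  ∀ u ∈ e, ∀ v ∈ e, χ u = χ v

/-- The number of edges in `F` that are monochromatic under `χ`. -/
def monoCount {q : ℕ} (χ : V → Fin q) (F : Set (Sym2 V)) : ℕ :=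
  {e ∈ F | Mono χ e}.ncard

/-- m_G(χ): the number of monochromatic edges of `G` under `χ`. -/
def mG {q : ℕ} (G : SimpleGraph V) (χ : V → Fin q) : ℕ := monoCount χ G.edgeSet

/-- The q-colour Potts model partition function. -/
def Z [Fintype V] [DecidableEq V] (G : SimpleGraph V) (q : ℕ) (β : ℝ) : ℝ :=
  ∑ ω : V → Fin q, Real.exp (β * (mG G ω : ℝ))

/-- P_1, …, P_ℓ form a partition of the vertex set. -/
def IsPartition {ℓ : ℕ} (P : Fin ℓ → Set V) : Prop :=
  (∀ i j : Fin ℓ, i ≠ j → Disjoint (P i) (P j)) ∧ (⋃ i, P i) = Set.univ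

/-- A set is small (w.r.t. the partition P) if |S ∩ P i| ≤ |P i|/2 for all i. -/
def Small {ℓ : ℕ} (P : Fin ℓ → Set V) (S : Set V) : Prop :=
  ∀ i, ((S ∩ P i).ncard : ℝ) ≤ ((P i).ncard : ℝ) / 2

/-- A set U is sparse if the vertex set of every connected component of G[U] is small. -/
def Sparse {ℓ : ℕ} (G : SimpleGraph V) (P : Fin ℓ → Set V) (U : Set V) : Prop :=
  ∀ u ∈ U, Small P {v | (restrict G U).Reachable u v}

/-- Every `S ⊆ P i` with `|S| ≤ |P i|/2` satisfies `|∂_{G[P i]}(S)| ≥ α |S|`. -/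
def PartExpansion {ℓ : ℕ} (G : SimpleGraph V) (P : Fin ℓ → Set V) (α : ℝ) : Prop :=
  ∀ i, ∀ S ⊆ P i, (S.ncard : ℝ) ≤ ((P i).ncard : ℝ) / 2 →
    α * (S.ncard : ℝ) ≤ ((bdry (restrict G (P i)) S).ncard : ℝ)

/-- A ground state: a colouring constant on each part of the partition. -/
def GroundState {q ℓ : ℕ} (P : Fin ℓ → Set V) (ψ : V → Fin q) : Prop :=
  ∀ i : Fin ℓ, ∀ u ∈ P i, ∀ v ∈ P i, ψ u = ψ v

/-- A state ω is close to a ground state ψ if on each part, more than half of the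
vertices agree with ψ. -/
def CloseTo {q ℓ : ℕ} (P : Fin ℓ → Set V) (ω ψ : V → Fin q) : Prop :=
  ∀ i : Fin ℓ, ((P i).ncard : ℝ) / 2 < ((P i ∩ {v | ω v = ψ v}).ncard : ℝ)

/-- Z*: the contribution to Z from states close to some ground state. -/
def Zstar [Fintype V] [DecidableEq V] {ℓ : ℕ} (G : SimpleGraph V) (P : Fin ℓ → Set V)
    (q : ℕ) (β : ℝ) : ℝ :=
  ∑ ω : V → Fin q,
    if ∃ ψ : V → Fin q, GroundState P ψ ∧ CloseTo P ω ψ then Real.exp (β * (mG G ω : ℝ)) else 0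

/-- The colouring of V that colours γ by `lam` and everything else by `ψ`. -/
def combine {q : ℕ} (γ : Set V) (ψ : V → Fin q) (lam : γ → Fin q) : V → Fin q :=
  fun v => if h : v ∈ γ then lam ⟨v, h⟩ else ψ v

/-- m_G(ψ, γ, λ): the number of edges of ∇(γ) that are monochromatic when γ is
coloured by λ and all other vertices by ψ. -/
def mRes {q : ℕ} (G : SimpleGraph V) (γ : Set V) (ψ : V → Fin q) (lam : γ → Fin q) : ℕ :=
  monoCount (combine γ ψ lam) (cl G γ)

/-- A polymer: a nonempty small set inducing a connected subgraph. -/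
def Polymer {ℓ : ℕ} (G : SimpleGraph V) (P : Fin ℓ → Set V) (γ : Set V) : Prop :=
  γ.Nonempty ∧ (G.induce γ).Connected ∧ Small P γ

/-- Two polymers are compatible if they are disjoint with disjoint edge boundaries. -/
def Compatible (G : SimpleGraph V) (γ γ' : Set V) : Prop :=
  Disjoint γ γ' ∧ Disjoint (bdry G γ) (bdry G γ')

/-- The family of vertex sets of connected components of G[U]. -/
def components (G : SimpleGraph V) (U : Set V) : Set (Set V) :=
  {C | ∃ u ∈ U, C = {v | (restrict G U).Reachable u v}}

/-!
Summing the expansion inequality over the colour classes `ω⁻¹(c) ∩ P`, which are all small,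
gives `α |P| ≤ ∑_c |∂(ω⁻¹(c) ∩ P)|`; and each bichromatic edge `uv` of `G[P]` lies in exactly
two of these boundaries, those of `ω u` and `ω v`.
-/

open Finset

variable {q : ℕ}

lemma mono_mk_iff {χ : V → Fin q} {a b : V} : Mono χ s(a, b) ↔ χ a = χ b := by
  refine ⟨fun h => h a (Sym2.mem_mk_left a b) b (Sym2.mem_mk_right a b), fun h => ?_⟩
  simp only [Mono, Sym2.mem_iff]
  rintro u (rfl | rfl) v (rfl | rfl) <;> simp [h]

lemma mem_of_mem_edgeSet_restrict {G : SimpleGraph V} {P : Set V} {e : Sym2 V}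
    (he : e ∈ (restrict G P).edgeSet) {x : V} (hx : x ∈ e) : x ∈ P := by
  induction e using Sym2.ind with
  | _ a b => rcases Sym2.mem_iff.mp hx with rfl | rfl; exacts [he.2.1, he.2.2]

lemma bdry_restrict_inter (G : SimpleGraph V) (P S : Set V) :
    bdry (restrict G P) (S ∩ P) = bdry (restrict G P) S := by
  ext e
  constructor
  · rintro ⟨he, ⟨u, hu, huS, -⟩, v, hv, hvS⟩
    exact ⟨he, ⟨u, hu, huS⟩, v, hv, fun h => hvS ⟨h, mem_of_mem_edgeSet_restrict he hv⟩⟩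
  · rintro ⟨he, ⟨u, hu, huS⟩, v, hv, hvS⟩
    exact ⟨he, ⟨u, hu, huS, mem_of_mem_edgeSet_restrict he hu⟩, v, hv, fun h => hvS h.1⟩

lemma mem_bdry_preimage_singleton_iff {H : SimpleGraph V} {χ : V → Fin q} {c : Fin q}
    {e : Sym2 V} :
    e ∈ bdry H (χ ⁻¹' {c}) ↔ (e ∈ H.edgeSet ∧ ¬ Mono χ e) ∧ c ∈ e.map χ := by
  induction e using Sym2.ind with
  | _ a b =>
    simp only [bdry, Set.mem_preimage, Set.mem_singleton_iff, Sym2.map_mk,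
      Sym2.mem_iff, mono_mk_iff]
    grind

lemma card_filter_mem_map_of_not_mono {χ : V → Fin q} {e : Sym2 V} (h : ¬ Mono χ e) :
    #{c | c ∈ e.map χ} = 2 := by
  induction e using Sym2.ind with
  | _ a b =>
    rw [mono_mk_iff] at h
    rw [Sym2.map_mk, ← Sym2.card_toFinset_of_not_isDiag _ (Sym2.mk_isDiag_iff.not.mpr h)]
    congr 1
    ext c
    simp

lemma ncard_eq_sum_ncard_preimage_inter {α β : Type*} [Fintype β] (f : α → β) {s : Set α}
    (hs : s.Finite) : s.ncard = ∑ b, (f ⁻¹' {b} ∩ s).ncard := by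
  rw [← finsum_eq_sum_of_fintype, ← Set.ncard_iUnion_of_finite (fun _ => hs.inter_of_right _)]
  · congr 1; ext x; simp
  · intro b b' hbb'
    exact Set.disjoint_left.mpr fun x hb hb' => hbb' (hb.1.symm.trans hb'.1)

lemma ncard_eq_card_filter_mem {α : Type*} [Fintype α] (s : Set α) :
    s.ncard = #{x | x ∈ s} := by
  rw [← Set.ncard_coe_finset]; congr 1; ext; simp

theorem sum_ncard_bdry_preimage_singleton [Fintype V] (H : SimpleGraph V) (χ : V → Fin q) :
    ∑ c, (bdry H (χ ⁻¹' {c})).ncard = 2 * {e ∈ H.edgeSet | ¬ Mono χ e}.ncard := by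
  set B : Finset (Sym2 V) := {e | e ∈ H.edgeSet ∧ ¬ Mono χ e}
  calc ∑ c, (bdry H (χ ⁻¹' {c})).ncard
      = ∑ c, #(B.bipartiteAbove (fun c e => c ∈ e.map χ) c) := by
        refine sum_congr rfl fun c _ => ?_
        rw [ncard_eq_card_filter_mem]
        congr 1; ext e
        simp [B, mem_bdry_preimage_singleton_iff]
    _ = ∑ e ∈ B, #(univ.bipartiteBelow (fun c e => c ∈ e.map χ) e) :=
        sum_card_bipartiteAbove_eq_sum_card_bipartiteBelow _
    _ = ∑ e ∈ B, 2 := sum_congr rfl fun e he =>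
        card_filter_mem_map_of_not_mono (mem_filter.mp he).2.2
    _ = 2 * {e ∈ H.edgeSet | ¬ Mono χ e}.ncard := by
        rw [sum_const, smul_eq_mul, mul_comm, ncard_eq_card_filter_mem]
        congr 2; ext; simp [B]

theorem statement3_general [Fintype V] (G : SimpleGraph V) (P : Set V) (α : ℝ)
    (hexp : ∀ S ⊆ P, (S.ncard : ℝ) ≤ (P.ncard : ℝ) / 2 →
      α * (S.ncard : ℝ) ≤ ((bdry (restrict G P) S).ncard : ℝ))
    (q : ℕ) (ω : V → Fin q)
    (hω : ∀ c : Fin q, (((ω ⁻¹' {c}) ∩ P).ncard : ℝ) ≤ (P.ncard : ℝ) / 2) :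
    α * (P.ncard : ℝ) / 2 ≤
      (({e ∈ (restrict G P).edgeSet | ¬ Mono ω e}).ncard : ℝ) := by
  have hP : (P.ncard : ℝ) = ∑ c, (((ω ⁻¹' {c}) ∩ P).ncard : ℝ) := by
    exact_mod_cast ncard_eq_sum_ncard_preimage_inter ω P.toFinite
  have hbdry : ∑ c, ((bdry (restrict G P) (ω ⁻¹' {c} ∩ P)).ncard : ℝ) =
      2 * ({e ∈ (restrict G P).edgeSet | ¬ Mono ω e}.ncard : ℝ) := by
    simp_rw [bdry_restrict_inter]
    exact_mod_cast sum_ncard_bdry_preimage_singleton (restrict G P) ω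
  calc α * (P.ncard : ℝ) / 2 = (∑ c, α * ((ω ⁻¹' {c} ∩ P).ncard : ℝ)) / 2 := by
        rw [hP, mul_sum]
    _ ≤ (∑ c, ((bdry (restrict G P) (ω ⁻¹' {c} ∩ P)).ncard : ℝ)) / 2 := by
        gcongr with c
        exact hexp _ Set.inter_subset_right (hω c)
    _ = _ := by rw [hbdry]; ring

/-- if no colour class covers more than half of P, then G[P] has
at least α|P|/2 bichromatic edges. -/
theorem statement3 [Fintype V] (G : SimpleGraph V) (P : Set V) (α : ℝ) (hα : 0 < α)
    (hexp : ∀ S ⊆ P, (S.ncard : ℝ) ≤ (P.ncard : ℝ) / 2 →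
      α * (S.ncard : ℝ) ≤ ((bdry (restrict G P) S).ncard : ℝ))
    (q : ℕ) (hq : 2 ≤ q) (ω : V → Fin q)
    (hω : ∀ c : Fin q, (((ω ⁻¹' {c}) ∩ P).ncard : ℝ) ≤ (P.ncard : ℝ) / 2) :
    α * (P.ncard : ℝ) / 2 ≤
      (({e ∈ (restrict G P).edgeSet | ¬ Mono ω e}).ncard : ℝ) :=
  statement3_general G P α hexp q ω hω

end Paper

end
end

section
/- Let G=(V,E) be a finite simple graph of maximum degree Δ ≥ 1 and let v be a vertex of G. For every integer t ≥ 1, the number of subsets U ⊆ V with v ∈ U, |U| = t, and G[U] connected is at most (eΔ)^t. -/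
/-!
Choose each vertex independently with probability `p = 1/Δ`, giving a random set `W`
(encoded as `ω : V → Bool`, with probabilities as finite sums of the product weights
`bernoulliWeight`). A connected `U ∋ v` is the vertex set of the component of `v` in `G[W]`
exactly when `U ⊆ W` and `W` avoids the outer vertex boundary `∂U`, an event of probability
`p ^ |U| * (1 - p) ^ |∂U|`. For distinct `U` these events are disjoint, so the probabilities sum
to at most `1`. When `|U| = t ≥ 2`, every vertex of `U` has a neighbour inside `U`, so
`|∂U| ≤ t (Δ - 1)` and the number of such `U` is at most
`Δ ^ t (1 + 1/(Δ - 1)) ^ (t (Δ - 1)) ≤ (eΔ) ^ t`.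
-/

open Classical

noncomputable section

namespace Paper

variable {V : Type*}

open Finset

section Bernoulli

variable [Fintype V]

def bernoulliWeight (p : ℝ) (ω : V → Bool) : ℝ := ∏ x, if ω x then p else 1 - p

def cylinder (A B : Finset V) : Finset (V → Bool) :=
  univ.filter fun ω => (∀ x ∈ A, ω x = true) ∧ ∀ x ∈ B, ω x = false

lemma bernoulliWeight_nonneg {p : ℝ} (hp₀ : 0 ≤ p) (hp₁ : p ≤ 1) (ω : V → Bool) :
    0 ≤ bernoulliWeight p ω :=
  prod_nonneg fun x _ => by split_ifs <;> linarith

lemma sum_bernoulliWeight (p : ℝ) : ∑ ω, bernoulliWeight p (V := V) ω = 1 := by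
  have := prod_univ_sum (fun _ : V => (univ : Finset Bool)) fun _ b => if b then p else 1 - p
  simp only [Fintype.piFinset_univ, Fintype.sum_bool, if_true, Bool.false_eq_true, if_false,
    add_sub_cancel, prod_const_one] at this
  exact this.symm

lemma sum_bernoulliWeight_cylinder (p : ℝ) {A B : Finset V} (hAB : Disjoint A B) :
    ∑ ω ∈ cylinder A B, bernoulliWeight p ω = p ^ #A * (1 - p) ^ #B := by
  have hcyl : cylinder A B = Fintype.piFinset fun x =>
      if x ∈ A then {true} else if x ∈ B then {false} else univ := by
    ext ω
    simp only [cylinder, mem_filter, mem_univ, true_and, Fintype.mem_piFinset]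
    constructor
    · rintro ⟨hA, hB⟩ x
      split_ifs with hxA hxB
      · simp [hA x hxA]
      · simp [hB x hxB]
      · exact mem_univ _
    · intro h
      refine ⟨fun x hx => by simpa [hx] using h x, fun x hx => ?_⟩
      simpa [hx, disjoint_right.1 hAB hx] using h x
  have hfactor : ∀ x, (∑ b ∈ (if x ∈ A then {true} else if x ∈ B then {false} else univ),
      if b then p else 1 - p) = (if x ∈ A then p else 1) * (if x ∈ B then 1 - p else 1) := by
    intro x
    by_cases hxA : x ∈ A
    · simp [hxA, disjoint_left.1 hAB hxA]
    · by_cases hxB : x ∈ B <;> simp [hxA, hxB]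
  unfold bernoulliWeight
  rw [hcyl, ← prod_univ_sum (fun x => if x ∈ A then {true} else if x ∈ B then {false} else univ)
    fun _ b => if b then p else 1 - p]
  simp only [hfactor, prod_mul_distrib, prod_ite_mem, univ_inter, prod_const]

lemma sum_pow_mul_pow_le_one_of_pairwiseDisjoint {ι : Type*} {s : Finset ι} {A B : ι → Finset V}
    {p : ℝ} (hp₀ : 0 ≤ p) (hp₁ : p ≤ 1) (hAB : ∀ i ∈ s, Disjoint (A i) (B i))
    (hdisj : (s : Set ι).PairwiseDisjoint fun i => cylinder (A i) (B i)) :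
    ∑ i ∈ s, p ^ #(A i) * (1 - p) ^ #(B i) ≤ 1 := by
  calc ∑ i ∈ s, p ^ #(A i) * (1 - p) ^ #(B i)
      = ∑ i ∈ s, ∑ ω ∈ cylinder (A i) (B i), bernoulliWeight p ω :=
        sum_congr rfl fun i hi => (sum_bernoulliWeight_cylinder p (hAB i hi)).symm
    _ = ∑ ω ∈ s.biUnion fun i => cylinder (A i) (B i), bernoulliWeight p ω :=
        (sum_biUnion hdisj).symm
    _ ≤ ∑ ω, bernoulliWeight p ω :=
        sum_le_univ_sum_of_nonneg fun ω => bernoulliWeight_nonneg hp₀ hp₁ ω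
    _ = 1 := sum_bernoulliWeight p

end Bernoulli

section Graph

open SimpleGraph

variable (G : SimpleGraph V)

lemma subset_of_induce_connected {U U' : Set V} (hU : (G.induce U).Connected) {a : V}
    (haU : a ∈ U) (haU' : a ∈ U') (hclosed : ∀ x ∈ U', ∀ y ∈ U, G.Adj x y → y ∈ U') :
    U ⊆ U' := by
  intro y hyU
  by_contra hyU'
  obtain ⟨p⟩ := hU.preconnected ⟨a, haU⟩ ⟨y, hyU⟩
  obtain ⟨d, -, hd₁, hd₂⟩ := p.exists_boundary_dart {z | (z : V) ∈ U'} haU' hyU'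
  exact hd₂ (hclosed _ hd₁ _ d.snd.2 d.adj)

lemma exists_adj_of_induce_connected {U : Set V} (hU : (G.induce U).Connected)
    (hU₁ : U.Nontrivial) {u : V} (hu : u ∈ U) : ∃ w ∈ U, G.Adj u w := by
  have := hU₁.coe_sort
  obtain ⟨w, hw⟩ := hU.preconnected.exists_adj_of_nontrivial ⟨u, hu⟩
  exact ⟨w, w.2, hw⟩

variable [Fintype V]

lemma deg_eq_degree (u : V) : deg G u = G.degree u := by
  rw [deg, Set.ncard_eq_toFinset_card', ← card_neighborFinset_eq_degree, neighborFinset]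

def outerBoundary (U : Finset V) : Finset V :=
  univ.filter fun x => x ∉ U ∧ ∃ u ∈ U, G.Adj u x

lemma disjoint_outerBoundary (U : Finset V) : Disjoint U (outerBoundary G U) :=
  disjoint_right.2 fun _ hx => (mem_filter.1 hx).2.1

lemma card_outerBoundary_le {U : Finset V} {Δ : ℕ} (hdeg : ∀ u ∈ U, G.degree u ≤ Δ)
    (hadj : ∀ u ∈ U, ∃ w ∈ U, G.Adj u w) : #(outerBoundary G U) ≤ #U * (Δ - 1) := by
  have hout : ∀ u ∈ U, #((G.neighborFinset u).filter (· ∉ U)) ≤ Δ - 1 := by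
    intro u hu
    obtain ⟨w, hwU, huw⟩ := hadj u hu
    have hlt : (G.neighborFinset u).filter (· ∉ U) ⊂ G.neighborFinset u :=
      (filter_ssubset).2 ⟨w, (mem_neighborFinset G u w).2 huw, not_not.2 hwU⟩
    have := card_lt_card hlt
    rw [card_neighborFinset_eq_degree] at this
    have := hdeg u hu
    omega
  calc #(outerBoundary G U)
      ≤ #(U.biUnion fun u => (G.neighborFinset u).filter (· ∉ U)) := by
        refine card_le_card fun x hx => ?_
        obtain ⟨-, hxU, u, hu, hux⟩ := mem_filter.1 hx
        exact mem_biUnion.2 ⟨u, hu, mem_filter.2 ⟨(mem_neighborFinset G u x).2 hux, hxU⟩⟩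
    _ ≤ ∑ u ∈ U, #((G.neighborFinset u).filter (· ∉ U)) := card_biUnion_le
    _ ≤ ∑ _u ∈ U, (Δ - 1) := sum_le_sum hout
    _ = #U * (Δ - 1) := by rw [sum_const, smul_eq_mul]

lemma subset_of_mem_cylinder_outerBoundary {U U' : Finset V} {v : V} (hv : v ∈ U)
    (hv' : v ∈ U') (hU : (G.induce (U : Set V)).Connected) {ω : V → Bool}
    (hω : ω ∈ cylinder U (outerBoundary G U)) (hω' : ω ∈ cylinder U' (outerBoundary G U')) :
    U ⊆ U' := by
  refine coe_subset.1 <| subset_of_induce_connected G hU (mem_coe.2 hv) (mem_coe.2 hv')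
    fun x hx y hy hxy => ?_
  by_contra hyU'
  have hyb : y ∈ outerBoundary G U' := mem_filter.2 ⟨mem_univ _, hyU', x, hx, hxy⟩
  have h₁ := (mem_filter.1 hω).2.1 y hy
  have h₂ := (mem_filter.1 hω').2.2 y hyb
  rw [h₁] at h₂
  exact Bool.noConfusion h₂

end Graph

section Counting

variable [Fintype V] (G : SimpleGraph V)

def connectedSetsContaining (v : V) (t : ℕ) : Finset (Finset V) :=
  univ.filter fun U => v ∈ U ∧ #U = t ∧ (G.induce (U : Set V)).Connected

lemma ncard_setOf_connected_eq_card (v : V) (t : ℕ) :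
    {U : Set V | v ∈ U ∧ U.ncard = t ∧ (G.induce U).Connected}.ncard =
      #(connectedSetsContaining G v t) := by
  have himage : {U : Set V | v ∈ U ∧ U.ncard = t ∧ (G.induce U).Connected} =
      (↑) '' (connectedSetsContaining G v t : Set (Finset V)) := by
    ext U
    constructor
    · rintro ⟨hv, hcard, hconn⟩
      refine ⟨U.toFinset, mem_coe.2 (mem_filter.2 ⟨mem_univ _, ?_⟩), Set.coe_toFinset U⟩
      rw [Set.mem_toFinset, ← Set.ncard_eq_toFinset_card', Set.coe_toFinset]
      exact ⟨hv, hcard, hconn⟩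
    · rintro ⟨F, hF, rfl⟩
      simpa [connectedSetsContaining] using hF
  rw [himage, Set.ncard_image_of_injective _ coe_injective, Set.ncard_coe_finset]

lemma card_connectedSetsContaining_le_one {t : ℕ} (ht : t ≤ 1) (v : V) :
    #(connectedSetsContaining G v t) ≤ 1 := by
  have hsingleton : ∀ U ∈ connectedSetsContaining G v t, U = {v} := by
    intro U hU
    obtain ⟨hv, hcard, -⟩ := (mem_filter.1 hU).2
    exact (eq_singleton_iff_unique_mem.2 ⟨hv, fun x hx => card_le_one.1 (hcard ▸ ht) x hx v hv⟩)
  exact card_le_one.2 fun U hU U' hU' => (hsingleton U hU).trans (hsingleton U' hU').symm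

lemma card_connectedSetsContaining_mul_le_one {Δ t : ℕ} (hdeg : ∀ u, G.degree u ≤ Δ)
    (ht : 2 ≤ t) (v : V) {p : ℝ} (hp₀ : 0 ≤ p) (hp₁ : p ≤ 1) :
    #(connectedSetsContaining G v t) * (p ^ t * (1 - p) ^ (t * (Δ - 1))) ≤ 1 := by
  rw [← nsmul_eq_mul, ← sum_const]
  refine le_trans (sum_le_sum fun U hU => ?_) <| sum_pow_mul_pow_le_one_of_pairwiseDisjoint
    hp₀ hp₁ (fun U _ => disjoint_outerBoundary G U) fun U hU U' hU' hne => ?_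
  · obtain ⟨-, hcard, hconn⟩ := (mem_filter.1 hU).2
    have hnontriv : (U : Set V).Nontrivial := one_lt_card_iff_nontrivial.1 (by omega)
    have hbdry := card_outerBoundary_le G (fun u _ => hdeg u)
      fun u hu => exists_adj_of_induce_connected G hconn hnontriv hu
    rw [hcard] at hbdry ⊢
    exact mul_le_mul_of_nonneg_left
      (pow_le_pow_of_le_one (sub_nonneg.2 hp₁) (sub_le_self 1 hp₀) hbdry) (by positivity)
  · obtain ⟨hv, -, hconn⟩ := (mem_filter.1 hU).2
    obtain ⟨hv', -, hconn'⟩ := (mem_filter.1 hU').2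
    refine disjoint_left.2 fun ω hω hω' => hne ?_
    exact (subset_of_mem_cylinder_outerBoundary G hv hv' hconn hω hω').antisymm
      (subset_of_mem_cylinder_outerBoundary G hv' hv hconn' hω' hω)

end Counting

open Real in
lemma one_le_exp_one_mul_one_sub_inv_pow {Δ : ℕ} (hΔ : 1 ≤ Δ) :
    1 ≤ exp 1 * (1 - (Δ : ℝ)⁻¹) ^ (Δ - 1) := by
  obtain ⟨m, rfl⟩ := Nat.exists_eq_add_of_le' hΔ
  rw [Nat.add_sub_cancel]
  have hinv : (1 + (m : ℝ)⁻¹) ^ m * (1 - ((m + 1 : ℕ) : ℝ)⁻¹) ^ m = 1 := by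
    rcases m.eq_zero_or_pos with rfl | hm
    · simp
    · have hm₀ : (m : ℝ) ≠ 0 := by positivity
      have hbase : (1 + (m : ℝ)⁻¹) * (1 - ((m + 1 : ℕ) : ℝ)⁻¹) = 1 := by
        push_cast
        field_simp
        ring
      rw [← mul_pow, hbase, one_pow]
  calc 1 = (1 + (m : ℝ)⁻¹) ^ m * (1 - ((m + 1 : ℕ) : ℝ)⁻¹) ^ m := hinv.symm
    _ ≤ exp 1 * (1 - ((m + 1 : ℕ) : ℝ)⁻¹) ^ m := by
      gcongr
      · exact pow_nonneg (sub_nonneg.2 (inv_le_one_of_one_le₀ (by exact_mod_cast hΔ))) m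
      · exact one_add_inv_pow_le_exp

open Real in
lemma le_exp_one_mul_pow_of_mul_le_one {N : ℝ} {Δ t : ℕ} (hΔ : 1 ≤ Δ) (hN : 0 ≤ N)
    (h : N * ((Δ : ℝ)⁻¹ ^ t * (1 - (Δ : ℝ)⁻¹) ^ (t * (Δ - 1))) ≤ 1) :
    N ≤ (exp 1 * Δ) ^ t := by
  have hw : 1 ≤ (exp 1 * Δ) ^ t * ((Δ : ℝ)⁻¹ ^ t * (1 - (Δ : ℝ)⁻¹) ^ (t * (Δ - 1))) := by
    have hcancel : exp 1 * Δ * ((Δ : ℝ)⁻¹ * (1 - (Δ : ℝ)⁻¹) ^ (Δ - 1)) =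
        exp 1 * (1 - (Δ : ℝ)⁻¹) ^ (Δ - 1) := by
      field_simp
    rw [mul_comm t, pow_mul, ← mul_pow, ← mul_pow, hcancel]
    exact one_le_pow₀ (one_le_exp_one_mul_one_sub_inv_pow hΔ)
  calc N ≤ N * ((exp 1 * Δ) ^ t * ((Δ : ℝ)⁻¹ ^ t * (1 - (Δ : ℝ)⁻¹) ^ (t * (Δ - 1)))) :=
        le_mul_of_one_le_right hN hw
    _ = (exp 1 * Δ) ^ t * (N * ((Δ : ℝ)⁻¹ ^ t * (1 - (Δ : ℝ)⁻¹) ^ (t * (Δ - 1)))) := by ring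
    _ ≤ (exp 1 * Δ) ^ t := mul_le_of_le_one_right (by positivity) h

theorem statement9_general [Fintype V] (G : SimpleGraph V) (Δ : ℕ) (hΔ1 : 1 ≤ Δ)
    (hΔ : ∀ v : V, deg G v ≤ Δ) (v : V) (t : ℕ) :
    (({U : Set V | v ∈ U ∧ U.ncard = t ∧ (G.induce U).Connected}).ncard : ℝ) ≤
      (Real.exp 1 * (Δ : ℝ)) ^ t := by
  rw [ncard_setOf_connected_eq_card]
  rcases le_or_gt t 1 with ht | ht
  · calc (#(connectedSetsContaining G v t) : ℝ) ≤ 1 := by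
          exact_mod_cast card_connectedSetsContaining_le_one G ht v
      _ ≤ (Real.exp 1 * Δ) ^ t := one_le_pow₀ <| one_le_mul_of_one_le_of_one_le
          (Real.one_le_exp zero_le_one) (by exact_mod_cast hΔ1)
  · have hdeg : ∀ u, G.degree u ≤ Δ := fun u => deg_eq_degree G u ▸ hΔ u
    have hp₀ : (0 : ℝ) ≤ (Δ : ℝ)⁻¹ := by positivity
    have hp₁ : (Δ : ℝ)⁻¹ ≤ 1 := inv_le_one_of_one_le₀ (by exact_mod_cast hΔ1)
    exact le_exp_one_mul_pow_of_mul_le_one hΔ1 (Nat.cast_nonneg _)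
      (card_connectedSetsContaining_mul_le_one G hdeg ht v hp₀ hp₁)

/-- the number of connected induced subgraphs on t vertices
containing a fixed vertex v is at most (eΔ)^t. -/
theorem statement9 [Fintype V] (G : SimpleGraph V) (Δ : ℕ) (hΔ1 : 1 ≤ Δ)
    (hΔ : ∀ v : V, deg G v ≤ Δ) (v : V) (t : ℕ) (ht : 1 ≤ t) :
    (({U : Set V | v ∈ U ∧ U.ncard = t ∧ (G.induce U).Connected}).ncard : ℝ) ≤
      (Real.exp 1 * (Δ : ℝ)) ^ t :=
  statement9_general G Δ hΔ1 hΔ v t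

end Paper

end
end

section
/- Let G=(V,E) be a finite simple graph, let u ∈ B ⊆ V, write d_V = deg_G(u) and d_B = deg_{G[B]}(u), and suppose vol_G(B) > d_V. Then φ_G(B∖{u}) ≤ φ_G(B) if and only if d_B ≤ (1 − φ_G(B))·d_V/2. -/
open Classical

noncomputable section

namespace Paper

variable {V : Type*}

/-! Removing `u` from `B` lowers the volume by `d_V` and changes the boundary by `2 d_B - d_V`:
the `d_V - d_B` edges from `u` to `V ∖ B` leave the boundary and the `d_B` edges from `u` into `B`
enter it. The equivalence is then an inequality between two fractions, cleared of denominators. -/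

lemma mem_bdry_mk (G : SimpleGraph V) (S : Set V) (a b : V) :
    s(a, b) ∈ bdry G S ↔ G.Adj a b ∧ (a ∈ S ∨ b ∈ S) ∧ (a ∉ S ∨ b ∉ S) := by
  simp only [bdry, Set.mem_ofPred_eq, Sym2.mem_iff, SimpleGraph.mem_edgeSet,
    exists_eq_or_imp, exists_eq_left]

lemma mk_mem_image_mk_iff (u : V) (N : Set V) (a b : V) :
    s(a, b) ∈ (fun v => s(u, v)) '' N ↔ (a = u ∧ b ∈ N) ∨ (b = u ∧ a ∈ N) := by
  simp only [Set.mem_image, Sym2.eq_iff]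
  aesop

lemma vol_sdiff_singleton_add_deg (G : SimpleGraph V) {S : Set V} (hS : S.Finite) {u : V}
    (hu : u ∈ S) : vol G (S \ {u}) + deg G u = vol G S := by
  conv_rhs => rw [← Set.insert_eq_of_mem hu, ← Set.insert_sdiff_singleton]
  rw [vol, vol, finsum_mem_insert (a := u) _ (by simp) hS.sdiff, add_comm]

lemma neighborSet_restrict (G : SimpleGraph V) {B : Set V} {u : V} (hu : u ∈ B) :
    (restrict G B).neighborSet u = G.neighborSet u ∩ B := by
  ext v
  simp [restrict, hu]

lemma bdry_sdiff_singleton_union (G : SimpleGraph V) {B : Set V} {u : V} (hu : u ∈ B) :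
    bdry G (B \ {u}) ∪ (fun v => s(u, v)) '' (G.neighborSet u \ B)
      = bdry G B ∪ (fun v => s(u, v)) '' (G.neighborSet u ∩ B) := by
  ext e
  induction e using Sym2.ind with
  | _ a b =>
    simp only [Set.mem_union, mem_bdry_mk, mk_mem_image_mk_iff, Set.mem_sdiff, Set.mem_inter_iff,
      Set.mem_singleton_iff, SimpleGraph.mem_neighborSet]
    have hne := G.ne_of_adj (a := a) (b := b)
    have hsymm := G.adj_symm (u := a) (v := b)
    by_cases hau : a = u <;> by_cases hbu : b = u <;> subst_vars <;> tauto

lemma ncard_bdry_sdiff_singleton_add_deg [Finite V] (G : SimpleGraph V) {B : Set V} {u : V}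
    (hu : u ∈ B) :
    (bdry G (B \ {u})).ncard + deg G u = (bdry G B).ncard + 2 * deg (restrict G B) u := by
  have hinj : Function.Injective (fun v : V => s(u, v)) := fun _ _ => Sym2.congr_right.mp
  have hdisj_out : Disjoint (bdry G (B \ {u})) ((fun v => s(u, v)) '' (G.neighborSet u \ B)) := by
    rw [Set.disjoint_right]
    rintro _ ⟨v, ⟨-, hv⟩, rfl⟩
    simp [mem_bdry_mk, hv]
  have hdisj_in : Disjoint (bdry G B) ((fun v => s(u, v)) '' (G.neighborSet u ∩ B)) := by
    rw [Set.disjoint_right]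
    rintro _ ⟨v, ⟨-, hv⟩, rfl⟩
    simp [mem_bdry_mk, hu, hv]
  have hcard := congrArg Set.ncard (bdry_sdiff_singleton_union G hu)
  rw [Set.ncard_union_eq hdisj_out, Set.ncard_union_eq hdisj_in,
    Set.ncard_image_of_injective _ hinj, Set.ncard_image_of_injective _ hinj] at hcard
  have hdeg := Set.ncard_inter_add_ncard_sdiff_eq_ncard (G.neighborSet u) B
  rw [deg, deg, neighborSet_restrict G hu]
  omega

lemma add_two_mul_sub_div_sub_le_div_iff {m d b k : ℝ} (hm : 0 < m) (hdm : d < m) :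
    (b + 2 * k - d) / (m - d) ≤ b / m ↔ k ≤ (1 - b / m) * d / 2 := by
  rw [div_le_div_iff₀ (sub_pos.mpr hdm) hm, one_sub_div hm.ne', div_mul_eq_mul_div,
    div_div, le_div_iff₀ (by positivity)]
  constructor <;> intro h <;> linarith

/-- removing a vertex does not increase conductance iff
d_B ≤ (1 − φ(B))·d_V/2. -/
theorem statement12 [Fintype V] (G : SimpleGraph V) (B : Set V) (u : V) (hu : u ∈ B)
    (h : deg G u < vol G B) :
    cond G (B \ {u}) ≤ cond G B ↔
      (deg (restrict G B) u : ℝ) ≤ (1 - cond G B) * (deg G u : ℝ) / 2 := by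
  have hvol : (vol G (B \ {u}) : ℝ) = vol G B - deg G u := by
    rw [eq_sub_iff_add_eq]
    exact_mod_cast vol_sdiff_singleton_add_deg G B.toFinite hu
  have hbdry : ((bdry G (B \ {u})).ncard : ℝ) =
      (bdry G B).ncard + 2 * deg (restrict G B) u - deg G u := by
    rw [eq_sub_iff_add_eq]
    exact_mod_cast ncard_bdry_sdiff_singleton_add_deg G hu
  have hm : (0 : ℝ) < vol G B := by exact_mod_cast (Nat.zero_le _).trans_lt h
  rw [cond, cond, hvol, hbdry]
  exact add_two_mul_sub_div_sub_le_div_iff hm (by exact_mod_cast h)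

end Paper

end
end

section
/- Let G=(V,E) be a finite simple graph with no isolated vertices, let B ⊆ P ⊆ V, and let S ⊆ P be nonempty. Write S_B = S ∩ B, S̄_B = B ∖ S, S_P = S ∖ B, and suppose vol_G(S_B) ≤ vol_G(B)/2. Let ℓ ≥ 1 and 0 < ε < 1 be reals, and let ξ > 0 satisfy: if S_P ≠ ∅ then ξ ≤ φ_G(S_P), and if S_B ≠ ∅ then ξ ≤ max{φ_G(S_B), φ_G(S̄_B)}. Suppose further: (1) if S_P ≠ ∅ then e(S_P, P) ≥ e(S_P, V)/ℓ; (2) if S_B ≠ ∅ then min{φ(S_B, B), φ(S̄_B, B)} ≥ ε/3. Then φ_G(S) ≥ φ_{G[P]}(S) ≥ εξ/(14ℓ). -/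
/-!
Split `S` into `S ∩ B` and `S \ B`. Inside `B`, the two relative-conductance hypotheses say that the
edges between `S ∩ B` and `B \ S` are, up to the factor `ε`, a constant share of the boundary of
either side; as `B \ S` carries at least half the volume of `B` and one side has conductance at
least `ξ`, this gives `εξ vol(S ∩ B) ≤ 7 e(S ∩ B, B)`, and the edges leaving `B` from `S ∩ B` are at
most `6/ε` times `e(S ∩ B, B)`. Outside `B`, `ξ vol(S \ B) ≤ |∂(S \ B)| ≤ ℓ e(S \ B, P)`, and those
edges of `e(S \ B, P)` that stay inside `S` end in `S ∩ B`, so they leave `B` from `S ∩ B` and are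
paid for by the previous bound. Summing gives `εξ vol_G(S) ≤ 14ℓ |∂_{G[P]}(S)|`. Passing from
`G[P]` to `G` adds the edges from `S` to `V ∖ P` to both the boundary and the volume of `S`, which
can only increase the ratio.
-/

open Classical

noncomputable section

namespace Paper

variable {V : Type*}

open Set

def edgesBetween (G : SimpleGraph V) (A B : Set V) : Set (Sym2 V) :=
  {e | e ∈ G.edgeSet ∧ ∃ u v, e = s(u, v) ∧ u ∈ A ∧ v ∈ B}

section EdgesBetween

variable (G : SimpleGraph V) {A B C S P : Set V}

theorem eCount_eq_ncard_edgesBetween (S T : Set V) :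
    eCount G S T = (edgesBetween G S (T \ S)).ncard := rfl

theorem edgesBetween_comm (A B : Set V) : edgesBetween G A B = edgesBetween G B A := by
  have key : ∀ A B : Set V, edgesBetween G A B ⊆ edgesBetween G B A := by
    rintro A B _ ⟨he, u, v, rfl, hu, hv⟩
    exact ⟨by simpa [Sym2.eq_swap] using he, v, u, Sym2.eq_swap, hv, hu⟩
  exact (key A B).antisymm (key B A)

theorem edgesBetween_mono_right (h : B ⊆ C) : edgesBetween G A B ⊆ edgesBetween G A C := by
  rintro _ ⟨he, u, v, rfl, hu, hv⟩
  exact ⟨he, u, v, rfl, hu, h hv⟩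

theorem edgesBetween_union_right :
    edgesBetween G A (B ∪ C) = edgesBetween G A B ∪ edgesBetween G A C := by
  ext e
  simp only [edgesBetween, mem_union, mem_ofPred_eq]
  constructor
  · rintro ⟨he, u, v, rfl, hu, hv | hv⟩
    exacts [.inl ⟨he, u, v, rfl, hu, hv⟩, .inr ⟨he, u, v, rfl, hu, hv⟩]
  · rintro (⟨he, u, v, rfl, hu, hv⟩ | ⟨he, u, v, rfl, hu, hv⟩)
    exacts [⟨he, u, v, rfl, hu, .inl hv⟩, ⟨he, u, v, rfl, hu, .inr hv⟩]

theorem disjoint_edgesBetween_right (hAB : Disjoint A B) (hBC : Disjoint B C) :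
    Disjoint (edgesBetween G A B) (edgesBetween G A C) := by
  rw [Set.disjoint_left]
  rintro _ ⟨-, u, v, rfl, hu, hv⟩ ⟨-, u', v', heq, hu', hv'⟩
  rcases Sym2.eq_iff.1 heq with ⟨-, rfl⟩ | ⟨-, rfl⟩
  exacts [hBC.ne_of_mem hv hv' rfl, hAB.ne_of_mem hu' hv rfl]

theorem bdry_eq_edgesBetween_compl (S : Set V) : bdry G S = edgesBetween G S Sᶜ := by
  ext e
  induction e using Sym2.ind with
  | _ x y =>
    constructor
    · rintro ⟨he, ⟨u, hue, hu⟩, ⟨v, hve, hv⟩⟩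
      rcases Sym2.mem_iff.1 hue with rfl | rfl <;> rcases Sym2.mem_iff.1 hve with rfl | rfl
      exacts [absurd hu hv, ⟨he, u, v, rfl, hu, hv⟩, ⟨he, u, v, Sym2.eq_swap, hu, hv⟩,
        absurd hu hv]
    · rintro ⟨he, u, v, heq, hu, hv⟩
      exact ⟨he, ⟨u, heq ▸ Sym2.mem_mk_left u v, hu⟩, ⟨v, heq ▸ Sym2.mem_mk_right u v, hv⟩⟩

theorem bdry_restrict_eq_edgesBetween (hSP : S ⊆ P) :
    bdry (restrict G P) S = edgesBetween G S (P \ S) := by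
  ext e
  rw [bdry_eq_edgesBetween_compl]
  constructor
  · rintro ⟨hadj, u, v, rfl, hu, hv⟩
    obtain ⟨hadj, -, hvP⟩ := hadj
    exact ⟨hadj, u, v, rfl, hu, hvP, hv⟩
  · rintro ⟨hadj, u, v, rfl, hu, hvP, hv⟩
    exact ⟨⟨hadj, hSP hu, hvP⟩, u, v, rfl, hu, hv⟩

variable [Finite V]

theorem ncard_edgesBetween_union_right (hAB : Disjoint A B) (hBC : Disjoint B C) :
    (edgesBetween G A (B ∪ C)).ncard =
      (edgesBetween G A B).ncard + (edgesBetween G A C).ncard := by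
  rw [edgesBetween_union_right]
  exact ncard_union_eq (disjoint_edgesBetween_right G hAB hBC)

theorem ncard_edgesBetween_union_left (hAB : Disjoint A B) (hAC : Disjoint A C) :
    (edgesBetween G (A ∪ B) C).ncard =
      (edgesBetween G A C).ncard + (edgesBetween G B C).ncard := by
  simp only [edgesBetween_comm G _ C]
  exact ncard_edgesBetween_union_right G hAC.symm hAB

theorem ncard_edgesBetween_eq_finsum (hAB : Disjoint A B) :
    (edgesBetween G A B).ncard = ∑ᶠ u ∈ A, (G.neighborSet u ∩ B).ncard := by
  have hunion : edgesBetween G A B = ⋃ u ∈ A, (fun v => s(u, v)) '' (G.neighborSet u ∩ B) := by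
    ext e
    simp only [edgesBetween, mem_ofPred_eq, mem_iUnion, mem_image, mem_inter_iff,
      SimpleGraph.mem_neighborSet, exists_prop]
    constructor
    · rintro ⟨he, u, v, rfl, hu, hv⟩
      exact ⟨u, hu, v, ⟨he, hv⟩, rfl⟩
    · rintro ⟨u, hu, v, ⟨he, hv⟩, rfl⟩
      exact ⟨he, u, v, rfl, hu, hv⟩
  rw [hunion, (toFinite A).ncard_biUnion (fun _ _ => toFinite _)]
  · exact finsum_mem_congr rfl fun u _ =>
      ncard_image_of_injective _ fun v w h => Sym2.congr_right.1 h
  · -- `s(u, v) = s(u', v')` with `u ≠ u'` forces `u' = v ∈ A ∩ B`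
    rintro u hu u' hu' hne
    refine Set.disjoint_left.2 ?_
    rintro _ ⟨v, ⟨-, hv⟩, rfl⟩ ⟨v', ⟨-, -⟩, heq⟩
    rcases Sym2.eq_iff.1 heq with ⟨rfl, -⟩ | ⟨rfl, -⟩
    exacts [hne rfl, hAB.ne_of_mem hu' hv rfl]

end EdgesBetween

section Volume

variable (G : SimpleGraph V) [Finite V] {A B S P : Set V}

theorem vol_union (h : Disjoint A B) : vol G (A ∪ B) = vol G A + vol G B :=
  finsum_mem_union h (toFinite A) (toFinite B)

theorem vol_add_vol_sdiff (hAB : A ⊆ B) : vol G A + vol G (B \ A) = vol G B := by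
  rw [← vol_union G disjoint_sdiff_right, union_sdiff_cancel hAB]

theorem vol_pos (hdeg : ∀ v, 0 < deg G v) (hS : S.Nonempty) : 0 < vol G S :=
  finsum_cond_pos (fun v _ => (hdeg v).le) (hS.imp fun v hv => ⟨hv, hdeg v⟩) (toFinite _)

theorem vol_eq_finsum_add_ncard_edgesBetween (hSP : S ⊆ P) :
    vol G S = ∑ᶠ v ∈ S, (G.neighborSet v ∩ P).ncard + (edgesBetween G S Pᶜ).ncard := by
  rw [ncard_edgesBetween_eq_finsum G (disjoint_compl_right_iff_subset.2 hSP),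
    ← finsum_mem_add_distrib (toFinite S)]
  exact finsum_mem_congr rfl fun v _ =>
    (ncard_inter_add_ncard_sdiff_eq_ncard (G.neighborSet v) P).symm

theorem ncard_bdry_le_vol (S : Set V) : (bdry G S).ncard ≤ vol G S := by
  rw [vol_eq_finsum_add_ncard_edgesBetween G subset_rfl, bdry_eq_edgesBetween_compl]
  exact Nat.le_add_left _ _

theorem vol_eq_vol_restrict_add (hSP : S ⊆ P) :
    vol G S = vol (restrict G P) S + (edgesBetween G S Pᶜ).ncard := by
  rw [vol_eq_finsum_add_ncard_edgesBetween G hSP]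
  congr 1
  refine finsum_mem_congr rfl fun v hv => congrArg ncard ?_
  ext w
  simp [restrict, hSP hv]

theorem vol_restrict_le (hSP : S ⊆ P) : vol (restrict G P) S ≤ vol G S := by
  rw [vol_eq_vol_restrict_add G hSP]
  exact Nat.le_add_right _ _

theorem ncard_bdry_eq_ncard_bdry_restrict_add (hSP : S ⊆ P) :
    (bdry G S).ncard = (bdry (restrict G P) S).ncard + (edgesBetween G S Pᶜ).ncard := by
  have hcompl : Sᶜ = (P \ S) ∪ Pᶜ := by
    ext x
    have := @hSP x
    simp only [mem_compl_iff, mem_union, mem_sdiff]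
    tauto
  rw [bdry_eq_edgesBetween_compl, bdry_restrict_eq_edgesBetween G hSP, hcompl]
  exact ncard_edgesBetween_union_right G disjoint_sdiff_right
    (disjoint_compl_right_iff_subset.2 sdiff_subset)

end Volume

theorem div_le_add_div_add {a r c : ℝ} (ha : 0 ≤ a) (har : a ≤ r) (hc : 0 ≤ c) :
    a / r ≤ (a + c) / (r + c) := by
  rcases ha.eq_or_lt with rfl | ha
  · rw [zero_div]; positivity
  · rw [div_le_div_iff₀ (ha.trans_le har) (by linarith)]
    nlinarith

section Conductance

variable (G : SimpleGraph V) {S P : Set V}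

theorem cond_nonneg (S : Set V) : 0 ≤ cond G S := by
  unfold cond; positivity

theorem mul_vol_le_ncard_bdry_of_le_cond {ξ : ℝ} (h : ξ ≤ cond G S) :
    ξ * vol G S ≤ (bdry G S).ncard := by
  rcases (Nat.cast_nonneg (vol G S) : (0 : ℝ) ≤ vol G S).eq_or_lt with h0 | hpos
  · rw [← h0, mul_zero]; positivity
  · exact (le_div_iff₀ hpos).1 h

variable [Finite V]

theorem le_cond_of_mul_le {b c : ℝ} (hb : 0 < b) (hvol : (vol G S : ℝ) ≤ b)
    (h : c * b ≤ (bdry G S).ncard) : c ≤ cond G S := by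
  rcases le_or_gt c 0 with hc | hc
  · exact hc.trans (cond_nonneg G S)
  have ha : (0 : ℝ) < (bdry G S).ncard := (mul_pos hc hb).trans_le h
  have hr : (0 : ℝ) < vol G S := ha.trans_le (by exact_mod_cast ncard_bdry_le_vol G S)
  calc c ≤ (bdry G S).ncard / b := (le_div_iff₀ hb).2 h
    _ ≤ cond G S := div_le_div_of_nonneg_left ha.le hr hvol

theorem cond_restrict_le_cond (hSP : S ⊆ P) : cond (restrict G P) S ≤ cond G S := by
  unfold cond
  rw [ncard_bdry_eq_ncard_bdry_restrict_add G hSP, vol_eq_vol_restrict_add G hSP]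
  push_cast
  exact div_le_add_div_add (Nat.cast_nonneg _)
    (by exact_mod_cast ncard_bdry_le_vol (restrict G P) S) (Nat.cast_nonneg _)

end Conductance

section Counting

variable (G : SimpleGraph V) {A B : Set V}

theorem eCount_univ (A : Set V) : eCount G A univ = (bdry G A).ncard := by
  rw [eCount_eq_ncard_edgesBetween, bdry_eq_edgesBetween_compl, compl_eq_univ_sdiff]

theorem eCount_sdiff_self (hAB : A ⊆ B) : eCount G (B \ A) B = eCount G A B := by
  rw [eCount_eq_ncard_edgesBetween, eCount_eq_ncard_edgesBetween, sdiff_sdiff_cancel_left hAB,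
    edgesBetween_comm]

-- `condPair` is `0` where its denominator vanishes, so a positive lower bound forces the
-- denominator to be positive.
theorem condPair_denom_pos {c : ℝ} (hc : 0 < c) (h : c ≤ condPair G A B) :
    0 < (vol G (B \ A) : ℝ) / vol G B * eCount G A (univ \ B) := by
  refine (by positivity : (0 : ℝ) ≤ _).lt_of_ne fun h0 => ?_
  rw [condPair, ← h0, div_zero] at h
  exact hc.not_ge h

theorem vol_pos_of_le_condPair {c : ℝ} (hc : 0 < c) (h : c ≤ condPair G A B) :
    (0 : ℝ) < vol G B := by
  have hden := condPair_denom_pos G hc h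
  refine (Nat.cast_nonneg _).lt_of_ne fun h0 => ?_
  rw [← h0, div_zero, zero_mul] at hden
  exact hden.false

theorem mul_le_eCount_of_le_condPair {c : ℝ} (hc : 0 < c) (h : c ≤ condPair G A B) :
    c * ((vol G (B \ A) : ℝ) / vol G B * eCount G A (univ \ B)) ≤ eCount G A B :=
  (le_div_iff₀ (condPair_denom_pos G hc h)).1 h

variable [Finite V]

theorem ncard_bdry_eq_eCount_add_eCount (A B : Set V) :
    (bdry G A).ncard = eCount G A B + eCount G A (univ \ B) := by
  have hcompl : Aᶜ = (B \ A) ∪ ((univ \ B) \ A) := by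
    ext x
    simp only [mem_compl_iff, mem_union, mem_sdiff, mem_univ, true_and]
    tauto
  rw [bdry_eq_edgesBetween_compl, hcompl]
  exact ncard_edgesBetween_union_right G disjoint_sdiff_right
    (disjoint_sdiff_right.mono sdiff_subset sdiff_subset)

theorem eps_mul_eCount_compl_le (hAB : A ⊆ B) (hvol : (vol G A : ℝ) ≤ vol G B / 2) {ε : ℝ}
    (hε : 0 < ε) (hpair : ε / 3 ≤ condPair G A B) :
    ε * eCount G A (univ \ B) ≤ 6 * eCount G A B := by
  have hsplit := vol_add_vol_sdiff G hAB
  have hB := vol_pos_of_le_condPair G (by positivity) hpair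
  have hhalf : (1 : ℝ) / 2 ≤ vol G (B \ A) / vol G B := by
    rw [le_div_iff₀ hB, ← hsplit]; push_cast [← hsplit] at hvol ⊢; linarith
  have := mul_le_eCount_of_le_condPair G (by positivity) hpair
  nlinarith [mul_le_mul_of_nonneg_right hhalf (Nat.cast_nonneg (α := ℝ) (eCount G A (univ \ B)))]

theorem eps_mul_xi_mul_vol_le_eCount (hAB : A ⊆ B) (hvol : (vol G A : ℝ) ≤ vol G B / 2)
    {ε ξ : ℝ} (hε0 : 0 < ε) (hε1 : ε ≤ 1) (hξ : 0 ≤ ξ)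
    (hξAB : ξ ≤ max (cond G A) (cond G (B \ A)))
    (hpairA : ε / 3 ≤ condPair G A B) (hpairB : ε / 3 ≤ condPair G (B \ A) B) :
    ε * ξ * vol G A ≤ 7 * eCount G A B := by
  have hout := eps_mul_eCount_compl_le G hAB hvol hε0 hpairA
  have hx : (0 : ℝ) ≤ eCount G A B := Nat.cast_nonneg _
  have ht : (0 : ℝ) ≤ vol G A := Nat.cast_nonneg _
  rcases le_max_iff.1 hξAB with hξA | hξB
  · have h := mul_vol_le_ncard_bdry_of_le_cond G hξA
    rw [ncard_bdry_eq_eCount_add_eCount G A B, Nat.cast_add] at h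
    calc ε * ξ * vol G A = ε * (ξ * vol G A) := by ring
      _ ≤ ε * (eCount G A B + eCount G A (univ \ B)) := mul_le_mul_of_nonneg_left h hε0.le
      _ ≤ 7 * eCount G A B := by nlinarith
  · have h := mul_vol_le_ncard_bdry_of_le_cond G hξB
    rw [ncard_bdry_eq_eCount_add_eCount G (B \ A) B, eCount_sdiff_self G hAB, Nat.cast_add] at h
    have hsplit := vol_add_vol_sdiff G hAB
    have hB := vol_pos_of_le_condPair G (by positivity) hpairB
    have hpair := mul_le_eCount_of_le_condPair G (by positivity) hpairB
    rw [sdiff_sdiff_cancel_left hAB, eCount_sdiff_self G hAB] at hpair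
    have hFout : ε * vol G A * eCount G (B \ A) (univ \ B) ≤ 3 * vol G B * eCount G A B :=
      calc ε * vol G A * eCount G (B \ A) (univ \ B)
          = 3 * vol G B * (ε / 3 * (vol G A / vol G B * eCount G (B \ A) (univ \ B))) := by
            field_simp
        _ ≤ 3 * vol G B * eCount G A B := by gcongr
    have hhalf : (vol G B : ℝ) / 2 ≤ vol G (B \ A) := by
      push_cast [← hsplit] at hvol ⊢; linarith
    have key : ε * ξ * vol G A * vol G B ≤ 7 * eCount G A B * vol G B := by
      nlinarith [mul_le_mul_of_nonneg_left h (mul_nonneg hε0.le ht),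
        mul_le_mul_of_nonneg_left hhalf (mul_nonneg (mul_nonneg hε0.le hξ) ht),
        mul_le_mul_of_nonneg_right hε1 (mul_nonneg ht hx)]
    exact le_of_mul_le_mul_right key hB

end Counting

theorem eps_mul_xi_mul_vol_le_ncard_bdry_restrict (G : SimpleGraph V) [Finite V] {B P S : Set V}
    (hBP : B ⊆ P) (hSP : S ⊆ P) {ℓ ε ξ : ℝ} (hℓ : 1 ≤ ℓ) (hε0 : 0 < ε) (hε1 : ε ≤ 1)
    (hB : ε * ξ * vol G (S ∩ B) ≤ 7 * eCount G (S ∩ B) B)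
    (hBout : ε * eCount G (S ∩ B) (univ \ B) ≤ 6 * eCount G (S ∩ B) B)
    (hP : ξ * vol G (S \ B) ≤ ℓ * eCount G (S \ B) P) :
    ε * ξ * vol G S ≤ 14 * ℓ * (bdry (restrict G P) S).ncard := by
  have hdisj : Disjoint (S ∩ B) (S \ B) := disjoint_sdiff_inter.symm
  have hvol : vol G S = vol G (S ∩ B) + vol G (S \ B) := by
    rw [← vol_union G hdisj, inter_union_sdiff]
  have hbdry : (bdry (restrict G P) S).ncard = (edgesBetween G (S ∩ B) (P \ S)).ncard +
      (edgesBetween G (S \ B) (P \ S)).ncard := by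
    rw [bdry_restrict_eq_edgesBetween G hSP]
    nth_rw 1 [← inter_union_sdiff S B]
    exact ncard_edgesBetween_union_left G hdisj
      (disjoint_sdiff_right.mono_left inter_subset_left)
  have hin : eCount G (S ∩ B) B ≤ (edgesBetween G (S ∩ B) (P \ S)).ncard :=
    ncard_le_ncard <| edgesBetween_mono_right G <|
      (sdiff_inter_self_eq_sdiff (s := B)).subset.trans (sdiff_subset_sdiff_left hBP)
  have hPsplit : eCount G (S \ B) P = (edgesBetween G (S \ B) (P \ S)).ncard +
      (edgesBetween G (S \ B) (S ∩ B)).ncard := by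
    have hcompl : P \ (S \ B) = (P \ S) ∪ (S ∩ B) := by
      ext x
      have := @hSP x
      simp only [mem_sdiff, mem_union, mem_inter_iff]
      tauto
    rw [eCount_eq_ncard_edgesBetween, hcompl]
    exact ncard_edgesBetween_union_right G (disjoint_sdiff_right.mono_left sdiff_subset)
      (disjoint_sdiff_left.mono_right inter_subset_left)
  have hcross : (edgesBetween G (S \ B) (S ∩ B)).ncard ≤ eCount G (S ∩ B) (univ \ B) := by
    rw [edgesBetween_comm]
    exact ncard_le_ncard <| edgesBetween_mono_right G fun x hx =>
      ⟨⟨mem_univ x, hx.2⟩, fun h => hx.2 h.2⟩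
  rw [hPsplit, Nat.cast_add] at hP
  rw [hvol, hbdry, Nat.cast_add, Nat.cast_add]
  set Ein : ℝ := (eCount G (S ∩ B) B : ℝ)
  set Eout : ℝ := (eCount G (S ∩ B) (univ \ B) : ℝ)
  set aB : ℝ := ((edgesBetween G (S ∩ B) (P \ S)).ncard : ℝ)
  set aP : ℝ := ((edgesBetween G (S \ B) (P \ S)).ncard : ℝ)
  set g : ℝ := ((edgesBetween G (S \ B) (S ∩ B)).ncard : ℝ)
  have hin : Ein ≤ aB := Nat.cast_le.2 hin
  have hcross : g ≤ Eout := Nat.cast_le.2 hcross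
  have hℓ0 : 0 ≤ ℓ := by linarith
  have hEin : 0 ≤ Ein := Nat.cast_nonneg _
  have haP : 0 ≤ aP := Nat.cast_nonneg _
  calc ε * ξ * (vol G (S ∩ B) + vol G (S \ B))
      = ε * ξ * vol G (S ∩ B) + ε * (ξ * vol G (S \ B)) := by ring
    _ ≤ 7 * Ein + ε * (ℓ * (aP + g)) := by gcongr
    _ = 7 * Ein + ℓ * (ε * aP) + ℓ * (ε * g) := by ring
    _ ≤ 7 * Ein + ℓ * aP + ℓ * (6 * Ein) := by
      gcongr 7 * Ein + ℓ * ?_ + ℓ * ?_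
      · exact mul_le_of_le_one_left haP hε1
      · exact (mul_le_mul_of_nonneg_left hcross hε0.le).trans hBout
    _ ≤ 14 * ℓ * (aB + aP) := by nlinarith

/-- Lemma 2.6 of Oveis Gharan–Trevisan: φ_G(S) ≥ φ_{G[P]}(S) ≥ εξ/(14ℓ). -/
theorem statement15 [Fintype V] (G : SimpleGraph V) (hiso : ∀ v : V, 0 < deg G v)
    (B P : Set V) (hBP : B ⊆ P) (S : Set V) (hSP : S ⊆ P) (hSne : S.Nonempty)
    (hvolSB : (vol G (S ∩ B) : ℝ) ≤ (vol G B : ℝ) / 2)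
    (ℓ ε ξ : ℝ) (hℓ : 1 ≤ ℓ) (hε0 : 0 < ε) (hε1 : ε < 1) (hξ : 0 < ξ)
    (hξP : (S \ B).Nonempty → ξ ≤ cond G (S \ B))
    (hξB : (S ∩ B).Nonempty → ξ ≤ max (cond G (S ∩ B)) (cond G (B \ S)))
    (h1 : (S \ B).Nonempty →
      (eCount G (S \ B) Set.univ : ℝ) / ℓ ≤ (eCount G (S \ B) P : ℝ))
    (h2 : (S ∩ B).Nonempty →
      ε / 3 ≤ min (condPair G (S ∩ B) B) (condPair G (B \ S) B)) :
    cond (restrict G P) S ≤ cond G S ∧ ε * ξ / (14 * ℓ) ≤ cond (restrict G P) S := by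
  have hpartB : ε * ξ * vol G (S ∩ B) ≤ 7 * eCount G (S ∩ B) B ∧
      ε * eCount G (S ∩ B) (univ \ B) ≤ 6 * eCount G (S ∩ B) B := by
    rcases (S ∩ B).eq_empty_or_nonempty with hSB | hSB
    · simp [hSB, eCount, vol]
    · obtain ⟨hpairA, hpairB⟩ := le_min_iff.1 (h2 hSB)
      have hξSB := hξB hSB
      rw [← sdiff_inter_self_eq_sdiff] at hpairB hξSB
      exact ⟨eps_mul_xi_mul_vol_le_eCount G inter_subset_right hvolSB hε0 hε1.le hξ.le hξSB
        hpairA hpairB, eps_mul_eCount_compl_le G inter_subset_right hvolSB hε0 hpairA⟩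
  have hpartP : ξ * vol G (S \ B) ≤ ℓ * eCount G (S \ B) P := by
    rcases (S \ B).eq_empty_or_nonempty with hSB | hSB
    · simp only [hSB, vol, finsum_mem_empty, Nat.cast_zero, mul_zero]
      exact mul_nonneg (by linarith) (Nat.cast_nonneg _)
    · calc ξ * vol G (S \ B) ≤ (bdry G (S \ B)).ncard :=
            mul_vol_le_ncard_bdry_of_le_cond G (hξP hSB)
        _ = eCount G (S \ B) univ := by rw [eCount_univ]
        _ ≤ ℓ * eCount G (S \ B) P := (div_le_iff₀' (by linarith)).1 (h1 hSB)
  have hmain := eps_mul_xi_mul_vol_le_ncard_bdry_restrict G hBP hSP hℓ hε0 hε1.le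
    hpartB.1 hpartB.2 hpartP
  refine ⟨cond_restrict_le_cond G hSP, le_cond_of_mul_le (restrict G P) (b := vol G S)
    (by exact_mod_cast vol_pos G hiso hSne) (by exact_mod_cast vol_restrict_le G hSP) ?_⟩
  rw [div_mul_eq_mul_div, div_le_iff₀ (by positivity)]
  linarith

end Paper

end
end
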